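/- (Lemma 7) Fix an integer n ≥ 1 and reals p ∈ (0,1), p_e ≥ 0, x_S > 0, L > 1. For each 1 ≤ m ≤ n−1 let y^{(m)} be the unique fully-connected age family with parameters (n, m, p, p_e, x_S), and define a_m := y^{(m)}(1) for 1 ≤ m ≤ n−1 and a_n := x_S. Then there exists a unique integer m* ∈ {1, …, n} such that a_{m*} < L·x_S and (m* = 1 or a_{m*−1} ≥ L·x_S). (m* is the unique number of subscribers for which the fully-connected network is AC-stable: every non-subscriber's expected age satisfies the age-compatibility constraint a_{m*} < L·x_S, while any subscriber that unsubscribed would violate it.) -/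

import Mathlib

/-- A fully-connected age family with parameters `n`, `m`, `p`, `pe`, `xS`:
`y k` is the long-term expected version age of a block of `k` non-subscribing
users in a fully-connected gossip network of `n` users with `m` subscribers. -/
def IsFCAgeFamily (n m : ℕ) (p pe xS : ℝ) (y : ℕ → ℝ) : Prop :=
  ∀ k : ℕ, 1 ≤ k → k ≤ n - m →
    y k * (1 - (1 - p) ^ (k * (n - k))) =
      pe + (∑ i ∈ Finset.Icc 1 (n - m - k),
        (Nat.choose (n - m - k) i : ℝ) * y (k + i) * (1 - (1 - p) ^ k) ^ i
          * (1 - p) ^ (k * (n - k - i)))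
      + (1 - (1 - p) ^ (k * m)) * xS

/-!
Every value of an age family is at least `xS`, by downward induction on `k`: the defining
equation writes `y k` as `pe ≥ 0` plus a combination, with binomial weights, of `xS` and of the
later values `y (k + i)`. Adding a subscriber lowers every value: splitting the binomial
coefficients by Pascal's rule, the weight that moves onto `xS` equals the total weight of the
dropped shifted terms, whose values are all at least `xS`. Hence `a` is antitone on
`1, …, n - 1`, and since `a n = xS < L * xS`, the first `m` with `a m < L * xS` is the only
count satisfying the stability condition.
-/

open Finset

section Binomial

variable {c Q : ℝ}

theorem sum_Icc_choose_mul_pow (h : c + Q = 1) (M : ℕ) :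
    ∑ i ∈ Icc 1 M, (M.choose i : ℝ) * (c ^ i * Q ^ (M - i)) = 1 - Q ^ M := by
  have hbin := add_pow c Q M
  rw [h, one_pow, Nat.range_succ_eq_Icc_zero, ← insert_Icc_add_one_left_eq_Icc (Nat.zero_le M),
    sum_insert (by simp)] at hbin
  simp only [pow_zero, Nat.sub_zero, Nat.choose_zero_right, Nat.cast_one, one_mul, mul_one,
    zero_add] at hbin
  rw [eq_sub_iff_add_eq, hbin, add_comm]
  exact congrArg (_ + ·) (sum_congr rfl fun _ _ ↦ by ring)

theorem sum_Icc_choose_pred_mul_pow (h : c + Q = 1) {M : ℕ} (hM : 1 ≤ M) :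
    ∑ i ∈ Icc 1 M, ((M - 1).choose (i - 1) : ℝ) * (c ^ i * Q ^ (M - i)) = c := by
  obtain ⟨N, rfl⟩ := Nat.exists_eq_add_of_le' hM
  rw [← Ico_add_one_right_eq_Icc, sum_Ico_eq_sum_range, Nat.add_sub_cancel, Nat.add_sub_cancel]
  calc _ = c * ∑ j ∈ range (N + 1), c ^ j * Q ^ (N - j) * (N.choose j : ℝ) := by
        rw [mul_sum]
        refine sum_congr rfl fun j _ ↦ ?_
        rw [show 1 + j - 1 = j by omega, show N + 1 - (1 + j) = N - j by omega]
        ring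
    _ = c := by rw [← add_pow, h, one_pow, mul_one]

theorem sum_Icc_choose_pred_add_le {N : ℕ} (hN : 1 ≤ N) {x : ℝ} {f g w : ℕ → ℝ}
    (hw : ∀ i ∈ Icc 1 N, 0 ≤ w i) (hgf : ∀ i ∈ Icc 1 (N - 1), g i ≤ f i)
    (hxf : ∀ i ∈ Icc 1 N, x ≤ f i) :
    ∑ i ∈ Icc 1 (N - 1), ((N - 1).choose i : ℝ) * (g i * w i)
        + x * ∑ i ∈ Icc 1 N, ((N - 1).choose (i - 1) : ℝ) * w i
      ≤ ∑ i ∈ Icc 1 N, (N.choose i : ℝ) * (f i * w i) := by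
  have hpascal : ∑ i ∈ Icc 1 N, (N.choose i : ℝ) * (f i * w i) =
      ∑ i ∈ Icc 1 N, ((N - 1).choose i : ℝ) * (f i * w i)
        + ∑ i ∈ Icc 1 N, ((N - 1).choose (i - 1) : ℝ) * (f i * w i) := by
    rw [← sum_add_distrib]
    refine sum_congr rfl fun i hi ↦ ?_
    rw [Nat.choose_eq_choose_pred_add (by omega) (by simp only [mem_Icc] at hi; omega)]
    push_cast
    ring
  have hmain : ∑ i ∈ Icc 1 (N - 1), ((N - 1).choose i : ℝ) * (g i * w i) ≤
      ∑ i ∈ Icc 1 N, ((N - 1).choose i : ℝ) * (f i * w i) := by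
    rw [← sum_subset (Icc_subset_Icc_right (by omega : N - 1 ≤ N)) fun i hi hi' ↦ by
      rw [Nat.choose_eq_zero_of_lt (by simp only [mem_Icc] at hi hi'; omega), Nat.cast_zero,
        zero_mul]]
    refine sum_le_sum fun i hi ↦ ?_
    have := hw i (Icc_subset_Icc_right (by omega) hi)
    gcongr
    exact hgf i hi
  have hshift : x * ∑ i ∈ Icc 1 N, ((N - 1).choose (i - 1) : ℝ) * w i ≤
      ∑ i ∈ Icc 1 N, ((N - 1).choose (i - 1) : ℝ) * (f i * w i) := by
    rw [mul_sum]
    refine sum_le_sum fun i hi ↦ ?_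
    have := hw i hi
    calc x * (((N - 1).choose (i - 1) : ℝ) * w i)
        _ = ((N - 1).choose (i - 1) : ℝ) * (x * w i) := by ring
        _ ≤ _ := by gcongr; exact hxf i hi
  linarith

end Binomial

theorem pow_mul_tsub_tsub (q : ℝ) {n m k i : ℕ} (h : m + k + i ≤ n) :
    q ^ (k * (n - k - i)) = (q ^ k) ^ (n - m - k - i) * q ^ (k * m) := by
  rw [show n - k - i = n - m - k - i + m by omega, mul_add, pow_add, pow_mul]

theorem sum_Icc_choose_mul_weight (q : ℝ) {n m k : ℕ} (h : m + k ≤ n) :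
    ∑ i ∈ Icc 1 (n - m - k),
        ((n - m - k).choose i : ℝ) * ((1 - q ^ k) ^ i * q ^ (k * (n - k - i)))
      = q ^ (k * m) * (1 - (q ^ k) ^ (n - m - k)) := by
  rw [← sum_Icc_choose_mul_pow (c := 1 - q ^ k) (Q := q ^ k) (by ring), mul_sum]
  refine sum_congr rfl fun i hi ↦ ?_
  rw [pow_mul_tsub_tsub q (m := m) (by simp only [mem_Icc] at hi; omega)]
  ring

theorem sum_Icc_choose_pred_mul_weight (q : ℝ) {n m k : ℕ} (h : m + k < n) :
    ∑ i ∈ Icc 1 (n - m - k),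
        ((n - m - k - 1).choose (i - 1) : ℝ) * ((1 - q ^ k) ^ i * q ^ (k * (n - k - i)))
      = q ^ (k * m) * (1 - q ^ k) := by
  nth_rw 2 [← sum_Icc_choose_pred_mul_pow (c := 1 - q ^ k) (Q := q ^ k) (by ring)
    (by omega : 1 ≤ n - m - k)]
  rw [mul_sum]
  refine sum_congr rfl fun i hi ↦ ?_
  rw [pow_mul_tsub_tsub q (m := m) (by simp only [mem_Icc] at hi; omega)]
  ring

theorem one_sub_one_sub_pow_pos {p : ℝ} (hp0 : 0 < p) (hp1 : p ≤ 1) {e : ℕ} (he : e ≠ 0) :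
    0 < 1 - (1 - p) ^ e := by
  have := pow_lt_one₀ (by linarith : 0 ≤ 1 - p) (by linarith : 1 - p < 1) he
  linarith

namespace IsFCAgeFamily

variable {n m : ℕ} {p pe xS : ℝ} {y y' : ℕ → ℝ}

theorem le_apply (hy : IsFCAgeFamily n m p pe xS y) (hp0 : 0 < p) (hp1 : p ≤ 1)
    (hpe : 0 ≤ pe) (hm : 1 ≤ m) {k : ℕ} (hk : 1 ≤ k) (hkn : k ≤ n - m) : xS ≤ y k := by
  induction hM : n - m - k using Nat.strong_induction_on generalizing k with
  | _ M ih =>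
  subst hM
  have hc : 0 ≤ 1 - (1 - p) ^ k := (one_sub_one_sub_pow_pos hp0 hp1 (by omega)).le
  have hsum : xS * ((1 - p) ^ (k * m) * (1 - ((1 - p) ^ k) ^ (n - m - k))) ≤
      ∑ i ∈ Icc 1 (n - m - k), ((n - m - k).choose i : ℝ)
        * (y (k + i) * ((1 - (1 - p) ^ k) ^ i * (1 - p) ^ (k * (n - k - i)))) := by
    rw [← sum_Icc_choose_mul_weight _ (by omega), mul_sum]
    refine sum_le_sum fun i hi ↦ ?_
    simp only [mem_Icc] at hi
    have := ih _ (by omega) (by omega : 1 ≤ k + i) (by omega) rfl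
    rw [mul_left_comm]
    gcongr
  have hD : 0 < 1 - (1 - p) ^ (k * (n - k)) :=
    one_sub_one_sub_pow_pos hp0 hp1 (Nat.mul_ne_zero (by omega) (by omega))
  have heq := hy k hk hkn
  simp only [mul_assoc] at heq
  rw [show (1 - p) ^ (k * (n - k)) = ((1 - p) ^ k) ^ (n - m - k) * (1 - p) ^ (k * m) by
    simpa using pow_mul_tsub_tsub (1 - p) (i := 0) (by omega)] at heq hD
  refine le_of_mul_le_mul_right ?_ hD
  nlinarith

theorem succ_apply_le (hy : IsFCAgeFamily n m p pe xS y)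
    (hy' : IsFCAgeFamily n (m + 1) p pe xS y') (hp0 : 0 < p) (hp1 : p ≤ 1) (hpe : 0 ≤ pe)
    (hm : 1 ≤ m) {k : ℕ} (hk : 1 ≤ k) (hkn : k ≤ n - (m + 1)) : y' k ≤ y k := by
  induction hM : n - (m + 1) - k using Nat.strong_induction_on generalizing k with
  | _ M ih =>
  subst hM
  have hc : 0 ≤ 1 - (1 - p) ^ k := (one_sub_one_sub_pow_pos hp0 hp1 (by omega)).le
  have hcmp := sum_Icc_choose_pred_add_le (N := n - m - k) (by omega) (x := xS)
    (f := fun i ↦ y (k + i)) (g := fun i ↦ y' (k + i))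
    (w := fun i ↦ (1 - (1 - p) ^ k) ^ i * (1 - p) ^ (k * (n - k - i)))
    (fun i _ ↦ by positivity)
    (fun i hi ↦ by simp only [mem_Icc] at hi; exact ih _ (by omega) (by omega) (by omega) rfl)
    (fun i hi ↦ by
      simp only [mem_Icc] at hi; exact hy.le_apply hp0 hp1 hpe hm (by omega) (by omega))
  rw [sum_Icc_choose_pred_mul_weight _ (by omega)] at hcmp
  have heq := hy k hk (by omega)
  have heq' := hy' k hk hkn
  rw [show n - (m + 1) - k = n - m - k - 1 by omega, mul_add_one, pow_add] at heq'
  simp only [mul_assoc] at heq heq'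
  have hD : 0 < 1 - (1 - p) ^ (k * (n - k)) :=
    one_sub_one_sub_pow_pos hp0 hp1 (Nat.mul_ne_zero (by omega) (by omega))
  refine le_of_mul_le_mul_right ?_ hD
  nlinarith

end IsFCAgeFamily

theorem existsUnique_first_lt {α : Type*} [LinearOrder α] {a : ℕ → α} {t : α} {n : ℕ}
    (hn : 1 ≤ n) (ha : AntitoneOn a (Set.Icc 1 (n - 1))) (hat : a n < t) :
    ∃! m : ℕ, (1 ≤ m ∧ m ≤ n) ∧ a m < t ∧ (m = 1 ∨ t ≤ a (m - 1)) := by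
  classical
  have hP : ∃ m, (1 ≤ m ∧ m ≤ n) ∧ a m < t := ⟨n, ⟨hn, le_rfl⟩, hat⟩
  obtain ⟨⟨hm₀, hm₀n⟩, hm₀t⟩ := Nat.find_spec hP
  refine ⟨Nat.find hP, ⟨⟨hm₀, hm₀n⟩, hm₀t, ?_⟩,
    fun m ⟨⟨hm, hmn⟩, hmt, hm1⟩ ↦ ?_⟩
  · by_contra! h
    exact Nat.find_min hP (by omega) ⟨⟨by omega, by omega⟩, h.2⟩
  · by_contra hne
    have hlt : Nat.find hP < m := (Nat.find_min' hP ⟨⟨hm, hmn⟩, hmt⟩).lt_of_ne' hne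
    have hprev : a (m - 1) ≤ a (Nat.find hP) :=
      ha ⟨hm₀, by omega⟩ ⟨by omega, by omega⟩ (by omega)
    exact (hm1.resolve_left (by omega)).not_gt (hprev.trans_lt hm₀t)

/-- Lemma 7: with `a m = y^{(m)}(1)` for `1 ≤ m ≤ n − 1` (the expected
age of a non-subscriber when there are `m` subscribers) and `a n = x_S`, there is a
unique `m* ∈ {1,…,n}` with `a m* < L·x_S` and (`m* = 1` or `a (m*−1) ≥ L·x_S`). -/
theorem fc_unique_stable_subscriber_count (n : ℕ) (hn : 1 ≤ n)
    (p pe xS L : ℝ) (hp0 : 0 < p) (hp1 : p < 1) (hpe : 0 ≤ pe)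
    (hxS : 0 < xS) (hL : 1 < L)
    (y : ℕ → ℕ → ℝ)
    (hy : ∀ m : ℕ, 1 ≤ m → m ≤ n - 1 → IsFCAgeFamily n m p pe xS (y m))
    (a : ℕ → ℝ)
    (ha : ∀ m : ℕ, 1 ≤ m → m ≤ n - 1 → a m = y m 1)
    (han : a n = xS) :
    ∃! mstar : ℕ, (1 ≤ mstar ∧ mstar ≤ n) ∧ a mstar < L * xS ∧
      (mstar = 1 ∨ L * xS ≤ a (mstar - 1)) := by
  refine existsUnique_first_lt hn ?_ (by rw [han]; exact lt_mul_of_one_lt_left hxS hL)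
  refine antitoneOn_of_succ_le Set.ordConnected_Icc fun m _ hm hm' ↦ ?_
  simp only [Order.succ_eq_add_one, Set.mem_Icc] at hm hm' ⊢
  rw [ha m hm.1 hm.2, ha (m + 1) hm'.1 hm'.2]
  exact (hy m hm.1 hm.2).succ_apply_le (hy (m + 1) hm'.1 hm'.2) hp0 hp1.le hpe hm.1 le_rfl
    (by omega)
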